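/- arXiv:1812.11476 — 7 statements merged into one kernel-verified Lean document; each statement's English description precedes it below -/
import Mathlib

section
/- Let θ, θ' be independent random vectors each uniform on {−1,1}^d, and let H be a d×d real positive semidefinite matrix. Then for all λ with 0 ≤ λ < 1/(2ρ(H)), one has log E[exp(λ θᵀ H θ')] ≤ (λ²/2) · ‖H‖_F² / (1 − 4λ²ρ(H)²), where ρ(H) is the spectral radius of H and ‖H‖_F its Frobenius norm. -/
/-- The real ±1 value encoded by a boolean. -/
noncomputable def sgn (b : Bool) : ℝ := if b then 1 else -1

/-!
Summing over `θ` first, `E_θ exp (λ θᵀ H θ') = ∏ᵢ cosh (λ (H θ')ᵢ) ≤ exp (λ² ‖H θ'‖² / 2)`.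
Writing `H = U diag(μ) Uᵀ` with `U` orthogonal, the Gaussian identity
`exp (‖w‖² / 2) = E_g exp ⟪w, g⟫` for `w = diag(μ) Uᵀ θ'` turns this into
`E_g exp (λ ⟪θ', U diag(μ) g⟫)`, which is again linear in `θ'`. Averaging over `θ'` and using the
cosh bound once more leaves `E_g exp (λ² ∑ₖ μₖ² gₖ² / 2) = ∏ₖ (1 - λ² μₖ²)^(-1/2)`, and
`-log (1 - y) ≤ y / (1 - c)` for `0 ≤ y ≤ c < 1` together with `∑ₖ μₖ² = ‖H‖_F²` gives the bound.
-/

open Real MeasureTheory ProbabilityTheory Matrix Finset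

variable {ι : Type*} [Fintype ι]

lemma integral_exp_dotProduct_pi_gaussianReal (w : ι → ℝ) :
    ∫ g, exp (w ⬝ᵥ g) ∂(Measure.pi fun _ : ι => gaussianReal 0 1) = exp (w ⬝ᵥ w / 2) := by
  simp only [dotProduct, exp_sum, sum_div]
  rw [integral_fintype_prod_eq_prod fun k x => exp (w k * x)]
  refine Finset.prod_congr rfl fun k _ => ?_
  have := congrFun (mgf_id_gaussianReal (μ := 0) (v := 1)) (w k)
  simpa [mgf, sq] using this

lemma integrable_exp_dotProduct_pi_gaussianReal (w : ι → ℝ) :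
    Integrable (fun g => exp (w ⬝ᵥ g)) (Measure.pi fun _ : ι => gaussianReal 0 1) := by
  simp_rw [dotProduct, exp_sum]
  exact Integrable.fintype_prod fun k => integrable_exp_mul_gaussianReal (w k)

lemma integral_exp_mul_sq_gaussianReal {c : ℝ} (hc : c < 1) :
    ∫ x, exp (c * x ^ 2 / 2) ∂gaussianReal 0 1 = (√(1 - c))⁻¹ := by
  have h1c : 0 < 1 - c := by linarith
  rw [integral_gaussianReal_eq_integral_smul one_ne_zero]
  simp only [gaussianPDFReal, smul_eq_mul, NNReal.coe_one, mul_one, sub_zero, mul_assoc,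
    ← exp_add]
  rw [integral_const_mul]
  have : ∀ x : ℝ, -x ^ 2 / 2 + c * x ^ 2 / 2 = -((1 - c) / 2) * x ^ 2 := fun x => by ring
  simp_rw [this, integral_gaussian]
  rw [← sqrt_inv, ← sqrt_inv, ← sqrt_mul (by positivity)]
  congr 1
  field_simp

lemma integrable_exp_mul_sq_gaussianReal {c : ℝ} (hc : c < 1) :
    Integrable (fun x => exp (c * x ^ 2 / 2)) (gaussianReal 0 1) := by
  refine .of_integral_ne_zero ?_
  rw [integral_exp_mul_sq_gaussianReal hc]
  have : 0 < 1 - c := by linarith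
  positivity

lemma integral_exp_sum_mul_sq_pi_gaussianReal {c : ι → ℝ} (hc : ∀ k, c k < 1) :
    ∫ g, exp (∑ k, c k * g k ^ 2 / 2) ∂(Measure.pi fun _ : ι => gaussianReal 0 1)
      = ∏ k, (√(1 - c k))⁻¹ := by
  simp only [exp_sum]
  rw [integral_fintype_prod_eq_prod fun k x => exp (c k * x ^ 2 / 2)]
  exact Finset.prod_congr rfl fun k _ => integral_exp_mul_sq_gaussianReal (hc k)

lemma integrable_exp_sum_mul_sq_pi_gaussianReal {c : ι → ℝ} (hc : ∀ k, c k < 1) :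
    Integrable (fun g => exp (∑ k, c k * g k ^ 2 / 2))
      (Measure.pi fun _ : ι => gaussianReal 0 1) := by
  simp_rw [exp_sum]
  exact Integrable.fintype_prod fun k => integrable_exp_mul_sq_gaussianReal (hc k)

lemma inv_sqrt_one_sub_le_exp {y c : ℝ} (hy : 0 ≤ y) (hyc : y ≤ c) (hc : c < 1) :
    (√(1 - y))⁻¹ ≤ exp (y / (2 * (1 - c))) := by
  have h1y : 0 < 1 - y := by linarith
  have h1c : 0 < 1 - c := by linarith
  have hlog : log (1 - y)⁻¹ ≤ y / (1 - c) := calc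
    log (1 - y)⁻¹ ≤ (1 - y)⁻¹ - 1 := log_le_sub_one_of_pos (by positivity)
    _ = y / (1 - y) := by field_simp; ring
    _ ≤ y / (1 - c) := by gcongr
  rw [← sqrt_inv, sqrt_eq_rpow, rpow_def_of_pos (by positivity), exp_le_exp]
  linarith [show y / (2 * (1 - c)) = y / (1 - c) / 2 by field_simp]

lemma four_mul_sq_mul_sq_lt_one_of_lt_one_div {lam ρ : ℝ} (hl0 : 0 ≤ lam) (hρ0 : 0 ≤ ρ)
    (hl : lam < 1 / (2 * ρ)) : 4 * lam ^ 2 * ρ ^ 2 < 1 := by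
  rcases hρ0.eq_or_lt with rfl | hρ
  · norm_num
  · rw [lt_div_iff₀ (by positivity)] at hl
    nlinarith [mul_nonneg hl0 hρ0]

section

variable [DecidableEq ι] {U A : Matrix ι ι ℝ} {μ : ι → ℝ}

lemma sum_exp_sgn_dotProduct (a : ι → ℝ) :
    ∑ s : ι → Bool, exp ((sgn ∘ s) ⬝ᵥ a) = ∏ i, 2 * cosh (a i) := by
  simp_rw [dotProduct, Function.comp_apply, exp_sum]
  rw [← Fintype.prod_sum fun i b => exp (sgn b * a i)]
  refine Finset.prod_congr rfl fun i _ => ?_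
  simp only [Fintype.sum_bool, sgn, ite_true, Bool.false_eq_true, ite_false, one_mul, neg_mul,
    cosh_eq]
  ring

lemma sum_exp_sgn_dotProduct_le (a : ι → ℝ) :
    ∑ s : ι → Bool, exp ((sgn ∘ s) ⬝ᵥ a) ≤ 2 ^ Fintype.card ι * exp (a ⬝ᵥ a / 2) := by
  calc ∑ s : ι → Bool, exp ((sgn ∘ s) ⬝ᵥ a) = ∏ i, 2 * cosh (a i) := sum_exp_sgn_dotProduct a
    _ ≤ ∏ i, 2 * exp (a i ^ 2 / 2) := by
      gcongr with i
      exact cosh_le_exp_half_sq (a i)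
    _ = 2 ^ Fintype.card ι * exp (a ⬝ᵥ a / 2) := by
      simp only [prod_mul_distrib, prod_const, card_univ, ← exp_sum, dotProduct, sum_div, sq]

lemma mulVec_dotProduct_mulVec_self (hU : Uᵀ * U = 1) (v : ι → ℝ) :
    (U *ᵥ v) ⬝ᵥ (U *ᵥ v) = v ⬝ᵥ v := by
  rw [dotProduct_mulVec, ← mulVec_transpose, mulVec_mulVec, hU, one_mulVec]

lemma sum_sq_entries_eq_sum_sq (hU : Uᵀ * U = 1) (hA : A = U * diagonal μ * Uᵀ) :
    ∑ i, ∑ j, A i j ^ 2 = ∑ k, μ k ^ 2 := by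
  have hAAt : A * Aᵀ = U * (diagonal μ * diagonal μ * Uᵀ) := by
    rw [hA, transpose_mul, transpose_mul, transpose_transpose, diagonal_transpose]
    calc U * diagonal μ * Uᵀ * (U * (diagonal μ * Uᵀ))
        = U * diagonal μ * (Uᵀ * U) * (diagonal μ * Uᵀ) := by simp only [Matrix.mul_assoc]
      _ = _ := by rw [hU, Matrix.mul_one]; simp only [Matrix.mul_assoc]
  calc ∑ i, ∑ j, A i j ^ 2 = trace (A * Aᵀ) := by simp [trace, mul_apply, sq]
    _ = ∑ k, μ k ^ 2 := by
      rw [hAAt, trace_mul_comm, Matrix.mul_assoc, hU, Matrix.mul_one, diagonal_mul_diagonal,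
        trace_diagonal]
      simp only [sq]

lemma Matrix.IsHermitian.transpose_eigenvectorUnitary_mul_self (hA : A.IsHermitian) :
    (hA.eigenvectorUnitary : Matrix ι ι ℝ)ᵀ * hA.eigenvectorUnitary = 1 := by
  simpa [star_eq_conjTranspose] using Unitary.coe_star_mul_self hA.eigenvectorUnitary

lemma Matrix.IsHermitian.eq_eigenvectorUnitary_mul_diagonal_mul_transpose (hA : A.IsHermitian) :
    A = hA.eigenvectorUnitary * diagonal hA.eigenvalues
      * (hA.eigenvectorUnitary : Matrix ι ι ℝ)ᵀ := by
  simpa [star_eq_conjTranspose] using hA.spectral_theorem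

lemma sum_exp_sq_mulVec_sgn_le (hU : Uᵀ * U = 1) (hA : A = U * diagonal μ * Uᵀ)
    (hμ : ∀ k, μ k ^ 2 < 1) :
    ∑ s : ι → Bool, exp ((A *ᵥ (sgn ∘ s)) ⬝ᵥ (A *ᵥ (sgn ∘ s)) / 2)
      ≤ 2 ^ Fintype.card ι * ∏ k, (√(1 - μ k ^ 2))⁻¹ := by
  set γ := Measure.pi fun _ : ι => gaussianReal 0 1
  have linearize (v : ι → ℝ) :
      exp ((A *ᵥ v) ⬝ᵥ (A *ᵥ v) / 2) = ∫ g, exp (v ⬝ᵥ (U *ᵥ (diagonal μ *ᵥ g))) ∂γ := by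
    have hAv : A *ᵥ v = U *ᵥ (diagonal μ *ᵥ (Uᵀ *ᵥ v)) := by
      rw [hA, mulVec_mulVec, mulVec_mulVec]
    have hdot (g : ι → ℝ) :
        v ⬝ᵥ (U *ᵥ (diagonal μ *ᵥ g)) = (diagonal μ *ᵥ (Uᵀ *ᵥ v)) ⬝ᵥ g := by
      rw [dotProduct_mulVec, ← mulVec_transpose, dotProduct_mulVec, ← mulVec_transpose,
        diagonal_transpose]
    simp_rw [hAv, mulVec_dotProduct_mulVec_self hU, hdot]
    exact (integral_exp_dotProduct_pi_gaussianReal _).symm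
  have integrable_exp (v : ι → ℝ) :
      Integrable (fun g => exp (v ⬝ᵥ (U *ᵥ (diagonal μ *ᵥ g)))) γ := by
    simp_rw [mulVec_mulVec, dotProduct_mulVec]
    exact integrable_exp_dotProduct_pi_gaussianReal _
  have diag_sq (g : ι → ℝ) :
      (diagonal μ *ᵥ g) ⬝ᵥ (diagonal μ *ᵥ g) / 2 = ∑ k, μ k ^ 2 * g k ^ 2 / 2 := by
    simp only [mulVec_diagonal, dotProduct, sum_div]
    exact Finset.sum_congr rfl fun k _ => by ring
  calc ∑ s : ι → Bool, exp ((A *ᵥ (sgn ∘ s)) ⬝ᵥ (A *ᵥ (sgn ∘ s)) / 2)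
      = ∫ g, ∑ s : ι → Bool, exp ((sgn ∘ s) ⬝ᵥ (U *ᵥ (diagonal μ *ᵥ g))) ∂γ := by
        rw [integral_finsetSum _ fun s _ => integrable_exp _]
        simp_rw [linearize]
    _ ≤ ∫ g, 2 ^ Fintype.card ι * exp (∑ k, μ k ^ 2 * g k ^ 2 / 2) ∂γ := by
        refine integral_mono (integrable_finsetSum _ fun s _ => integrable_exp _)
          ((integrable_exp_sum_mul_sq_pi_gaussianReal hμ).const_mul _) fun g => ?_
        simpa only [mulVec_dotProduct_mulVec_self hU, diag_sq] using
          sum_exp_sgn_dotProduct_le (U *ᵥ (diagonal μ *ᵥ g))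
    _ = 2 ^ Fintype.card ι * ∏ k, (√(1 - μ k ^ 2))⁻¹ := by
        rw [integral_const_mul, integral_exp_sum_mul_sq_pi_gaussianReal hμ]

theorem sum_sum_exp_sgn_dotProduct_mulVec_le (hU : Uᵀ * U = 1) (hA : A = U * diagonal μ * Uᵀ)
    {c : ℝ} (hμ : ∀ k, μ k ^ 2 ≤ c) (hc : c < 1) :
    ∑ s : ι → Bool, ∑ s' : ι → Bool, exp ((sgn ∘ s) ⬝ᵥ (A *ᵥ (sgn ∘ s')))
      ≤ 2 ^ Fintype.card ι * 2 ^ Fintype.card ι * exp (∑ k, μ k ^ 2 / (2 * (1 - c))) := by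
  calc ∑ s : ι → Bool, ∑ s' : ι → Bool, exp ((sgn ∘ s) ⬝ᵥ (A *ᵥ (sgn ∘ s')))
      = ∑ s' : ι → Bool, ∑ s : ι → Bool, exp ((sgn ∘ s) ⬝ᵥ (A *ᵥ (sgn ∘ s'))) := sum_comm
    _ ≤ ∑ s' : ι → Bool, 2 ^ Fintype.card ι * exp ((A *ᵥ (sgn ∘ s')) ⬝ᵥ (A *ᵥ (sgn ∘ s')) / 2) :=
        sum_le_sum fun s' _ => sum_exp_sgn_dotProduct_le _
    _ ≤ 2 ^ Fintype.card ι * (2 ^ Fintype.card ι * ∏ k, (√(1 - μ k ^ 2))⁻¹) := by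
        rw [← mul_sum]
        gcongr
        exact sum_exp_sq_mulVec_sgn_le hU hA fun k => (hμ k).trans_lt hc
    _ ≤ 2 ^ Fintype.card ι * (2 ^ Fintype.card ι * ∏ k, exp (μ k ^ 2 / (2 * (1 - c)))) := by
        gcongr with k
        exact inv_sqrt_one_sub_le_exp (sq_nonneg _) (hμ k) hc
    _ = _ := by rw [exp_sum, mul_assoc]

end

theorem rademacher_chaos_mgf_bound_general {d : ℕ}
    (H : Matrix (Fin d) (Fin d) ℝ) (hH : H.PosSemidef)
    (ρ : ℝ) (hρ : ρ = ⨆ i, |hH.1.eigenvalues i|)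
    (lam : ℝ) (hl0 : 0 ≤ lam) (hl : lam < 1 / (2 * ρ)) :
    Real.log ((∑ s : Fin d → Bool, ∑ s' : Fin d → Bool,
        Real.exp (lam * ∑ i, ∑ j, sgn (s i) * H i j * sgn (s' j))) / (2 ^ d * 2 ^ d))
      ≤ lam ^ 2 / 2 * (∑ i, ∑ j, (H i j) ^ 2) / (1 - 4 * lam ^ 2 * ρ ^ 2) := by
  set U : Matrix (Fin d) (Fin d) ℝ := ↑hH.1.eigenvectorUnitary
  set μ := hH.1.eigenvalues
  have hU : Uᵀ * U = 1 := hH.1.transpose_eigenvectorUnitary_mul_self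
  have hUμ : lam • H = U * diagonal (lam • μ) * Uᵀ := by
    rw [hH.1.eq_eigenvectorUnitary_mul_diagonal_mul_transpose, diagonal_smul, Matrix.mul_smul,
      Matrix.smul_mul]
  have hμρ (k) : |μ k| ≤ ρ := hρ ▸ le_ciSup (f := fun i => |μ i|) (Set.finite_range _).bddAbove k
  have hρ0 : 0 ≤ ρ := hρ ▸ Real.iSup_nonneg fun _ => abs_nonneg _
  have hc := four_mul_sq_mul_sq_lt_one_of_lt_one_div hl0 hρ0 hl
  have hμc (k) : (lam • μ) k ^ 2 ≤ 4 * lam ^ 2 * ρ ^ 2 := by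
    have : μ k ^ 2 ≤ ρ ^ 2 := sq_le_sq.mpr (by rw [abs_of_nonneg hρ0]; exact hμρ k)
    rw [Pi.smul_apply, smul_eq_mul, mul_pow]
    nlinarith [mul_le_mul_of_nonneg_left this (sq_nonneg lam)]
  have hexp (s s' : Fin d → Bool) : lam * ∑ i, ∑ j, sgn (s i) * H i j * sgn (s' j)
      = (sgn ∘ s) ⬝ᵥ ((lam • H) *ᵥ (sgn ∘ s')) := by
    simp only [dotProduct, mulVec, Matrix.smul_apply, mul_sum, Function.comp_apply, smul_eq_mul]
    exact sum_congr rfl fun i _ => sum_congr rfl fun j _ => by ring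
  have hfrob : ∑ k, (lam • μ) k ^ 2 / (2 * (1 - 4 * lam ^ 2 * ρ ^ 2))
      = lam ^ 2 / 2 * (∑ i, ∑ j, (H i j) ^ 2) / (1 - 4 * lam ^ 2 * ρ ^ 2) := by
    rw [← sum_div, sum_sq_entries_eq_sum_sq (μ := μ) hU
      hH.1.eq_eigenvectorUnitary_mul_diagonal_mul_transpose]
    simp only [Pi.smul_apply, smul_eq_mul, mul_pow, ← mul_sum]
    field_simp
  rw [log_le_iff_le_exp (by positivity), div_le_iff₀ (by positivity), ← hfrob]
  simp_rw [hexp]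
  simpa [mul_comm] using sum_sum_exp_sgn_dotProduct_mulVec_le hU hUμ hμc hc

/-- MGF bound for the decoupled Rademacher chaos `θᵀ H θ'` with `H` PSD:
`log E[exp(λ θᵀHθ')] ≤ (λ²/2) ‖H‖_F² / (1 − 4λ²ρ(H)²)` for `0 ≤ λ < 1/(2ρ(H))`. -/
theorem rademacher_chaos_mgf_bound {d : ℕ} (hd : 0 < d)
    (H : Matrix (Fin d) (Fin d) ℝ) (hH : H.PosSemidef)
    (ρ : ℝ) (hρ : ρ = ⨆ i, |hH.1.eigenvalues i|)
    (lam : ℝ) (hl0 : 0 ≤ lam) (hl : lam < 1 / (2 * ρ)) :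
    Real.log ((∑ s : Fin d → Bool, ∑ s' : Fin d → Bool,
        Real.exp (lam * ∑ i, ∑ j, sgn (s i) * H i j * sgn (s' j))) / (2 ^ d * 2 ^ d))
      ≤ lam ^ 2 / 2 * (∑ i, ∑ j, (H i j) ^ 2) / (1 - 4 * lam ^ 2 * ρ ^ 2) :=
  rademacher_chaos_mgf_bound_general H hH ρ hρ lam hl0 hl
end

section
/- Ingster's decoupling identity: Let θ be a random variable taking values in a finite index set, and for each value ϑ let Q_ϑⁿ = Q_{1,ϑ} × ⋯ × Q_{n,ϑ} be a product distribution on a finite product space, and let Pⁿ = P_1 × ⋯ × P_n be a fixed product distribution with all P_j(x) > 0. Then χ²(E_θ[Q_θⁿ] ‖ Pⁿ) = E_{θ,θ'}[∏_{j=1}^n (1 + H_j(θ,θ'))] − 1, where θ' is an independent copy of θ, δ_j^ϑ(x) = (Q_{j,ϑ}(x) − P_j(x))/P_j(x), and H_j(ϑ,ϑ') = E_{X_j∼P_j}[δ_j^ϑ(X_j) δ_j^{ϑ'}(X_j)]. -/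
/-- Ingster's decoupling identity for the chi-square distance between a mixture of
product distributions and a fixed product distribution. -/
theorem ingster_decoupling {n : ℕ} {Θ : Type*} [Fintype Θ]
    (X : Fin n → Type*) [∀ j, Fintype (X j)]
    (P : ∀ j, X j → ℝ) (hP0 : ∀ j x, 0 < P j x) (hP1 : ∀ j, ∑ x, P j x = 1)
    (Q : ∀ j, Θ → X j → ℝ) (hQ0 : ∀ j ϑ x, 0 ≤ Q j ϑ x) (hQ1 : ∀ j ϑ, ∑ x, Q j ϑ x = 1)
    (prior : Θ → ℝ) (hprior0 : ∀ ϑ, 0 ≤ prior ϑ) (hprior1 : ∑ ϑ, prior ϑ = 1) :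
    ∑ x : ∀ j, X j,
        ((∑ ϑ, prior ϑ * ∏ j, Q j ϑ (x j)) - ∏ j, P j (x j)) ^ 2 / ∏ j, P j (x j)
      = (∑ ϑ, ∑ ϑ', prior ϑ * prior ϑ' *
          ∏ j, (1 + ∑ x : X j,
            P j x * ((Q j ϑ x - P j x) / P j x) * ((Q j ϑ' x - P j x) / P j x))) - 1 := by
  have hPn : ∀ x : ∀ j, X j, (0:ℝ) < ∏ j, P j (x j) :=
    fun x => Finset.prod_pos fun j _ => hP0 j (x j)
  -- swap sum and product
  have swap : ∀ f : ∀ j, X j → ℝ, ∑ x : ∀ j, X j, ∏ j, f j (x j) = ∏ j, ∑ x, f j x := by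
    intro f
    rw [Finset.prod_univ_sum (fun _ => Finset.univ) f, Fintype.piFinset_univ]
  -- simplify RHS inner product
  have hRHS : ∀ ϑ ϑ' : Θ,
      (∏ j, (1 + ∑ x : X j,
          P j x * ((Q j ϑ x - P j x) / P j x) * ((Q j ϑ' x - P j x) / P j x)))
      = ∏ j, ∑ x : X j, Q j ϑ x * Q j ϑ' x / P j x := by
    intro ϑ ϑ'
    refine Finset.prod_congr rfl fun j _ => ?_
    have h1 : ∀ x : X j, P j x * ((Q j ϑ x - P j x) / P j x) * ((Q j ϑ' x - P j x) / P j x)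
        = Q j ϑ x * Q j ϑ' x / P j x - Q j ϑ x - Q j ϑ' x + P j x := by
      intro x
      have hx := (hP0 j x).ne'
      field_simp
      ring
    simp only [h1, Finset.sum_add_distrib, Finset.sum_sub_distrib, hQ1, hP1]
    ring
  -- per-pair computation
  have pair : ∀ ϑ ϑ' : Θ,
      ∑ x : ∀ j, X j, (prior ϑ * ∏ j, Q j ϑ (x j)) * (prior ϑ' * ∏ j, Q j ϑ' (x j))
          / ∏ j, P j (x j)
      = prior ϑ * prior ϑ' * ∏ j, ∑ x : X j, Q j ϑ x * Q j ϑ' x / P j x := by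
    intro ϑ ϑ'
    have hx : ∀ x : ∀ j, X j,
        (prior ϑ * ∏ j, Q j ϑ (x j)) * (prior ϑ' * ∏ j, Q j ϑ' (x j)) / ∏ j, P j (x j)
        = prior ϑ * prior ϑ' * ∏ j, (Q j ϑ (x j) * Q j ϑ' (x j) / P j (x j)) := by
      intro x
      rw [Finset.prod_div_distrib, Finset.prod_mul_distrib]
      ring
    simp only [hx]
    rw [← Finset.mul_sum, swap (fun j y => Q j ϑ y * Q j ϑ' y / P j y)]
  -- pointwise expansion of the square
  have key : ∀ x : ∀ j, X j,
      ((∑ ϑ, prior ϑ * ∏ j, Q j ϑ (x j)) - ∏ j, P j (x j)) ^ 2 / ∏ j, P j (x j)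
      = (∑ ϑ, ∑ ϑ', (prior ϑ * ∏ j, Q j ϑ (x j)) * (prior ϑ' * ∏ j, Q j ϑ' (x j))
            / ∏ j, P j (x j))
        - 2 * (∑ ϑ, prior ϑ * ∏ j, Q j ϑ (x j)) + ∏ j, P j (x j) := by
    intro x
    have hb := (hPn x).ne'
    have hsq : ((∑ ϑ, prior ϑ * ∏ j, Q j ϑ (x j)) - ∏ j, P j (x j)) ^ 2 / ∏ j, P j (x j)
        = (∑ ϑ, prior ϑ * ∏ j, Q j ϑ (x j)) * (∑ ϑ', prior ϑ' * ∏ j, Q j ϑ' (x j))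
            / ∏ j, P j (x j)
          - 2 * (∑ ϑ, prior ϑ * ∏ j, Q j ϑ (x j)) + ∏ j, P j (x j) := by
      field_simp
      ring
    rw [hsq, Finset.sum_mul_sum, Finset.sum_div]
    congr 1
    refine congrArg₂ _ ?_ rfl
    exact Finset.sum_congr rfl fun ϑ _ => Finset.sum_div _ _ _
  -- sums of the mixture and of P^n
  have hsumP : ∑ x : ∀ j, X j, ∏ j, P j (x j) = 1 := by
    rw [swap P]; simp [hP1]
  have hsumQ : ∀ ϑ, ∑ x : ∀ j, X j, ∏ j, Q j ϑ (x j) = 1 := by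
    intro ϑ; rw [swap (fun j => Q j ϑ)]; simp [hQ1]
  calc ∑ x : ∀ j, X j,
        ((∑ ϑ, prior ϑ * ∏ j, Q j ϑ (x j)) - ∏ j, P j (x j)) ^ 2 / ∏ j, P j (x j)
      = (∑ x : ∀ j, X j, ∑ ϑ, ∑ ϑ',
            (prior ϑ * ∏ j, Q j ϑ (x j)) * (prior ϑ' * ∏ j, Q j ϑ' (x j)) / ∏ j, P j (x j))
        - 2 * (∑ x : ∀ j, X j, ∑ ϑ, prior ϑ * ∏ j, Q j ϑ (x j))
        + ∑ x : ∀ j, X j, ∏ j, P j (x j) := by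
        simp only [key]
        rw [Finset.sum_add_distrib, Finset.sum_sub_distrib, ← Finset.mul_sum]
    _ = (∑ ϑ, ∑ ϑ', prior ϑ * prior ϑ' * ∏ j, ∑ x : X j, Q j ϑ x * Q j ϑ' x / P j x)
        - 2 * 1 + 1 := by
        have h1 : (∑ x : ∀ j, X j, ∑ ϑ, ∑ ϑ',
              (prior ϑ * ∏ j, Q j ϑ (x j)) * (prior ϑ' * ∏ j, Q j ϑ' (x j))
                / ∏ j, P j (x j))
            = ∑ ϑ, ∑ ϑ', prior ϑ * prior ϑ' *
                ∏ j, ∑ x : X j, Q j ϑ x * Q j ϑ' x / P j x := by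
          rw [Finset.sum_comm]
          refine Finset.sum_congr rfl fun ϑ _ => ?_
          rw [Finset.sum_comm]
          exact Finset.sum_congr rfl fun ϑ' _ => pair ϑ ϑ'
        have h2 : (∑ x : ∀ j, X j, ∑ ϑ, prior ϑ * ∏ j, Q j ϑ (x j)) = 1 := by
          rw [Finset.sum_comm]
          refine Eq.trans (Finset.sum_congr rfl fun ϑ _ => ?_) hprior1
          rw [← Finset.mul_sum, hsumQ ϑ, mul_one]
        rw [h1, h2, hsumP]
    _ = (∑ ϑ, ∑ ϑ', prior ϑ * prior ϑ' *
          ∏ j, (1 + ∑ x : X j,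
            P j x * ((Q j ϑ x - P j x) / P j x) * ((Q j ϑ' x - P j x) / P j x))) - 1 := by
        simp only [hRHS]; ring
end

section
/- Trace bound for communication-limited channels: if W is a channel from [k] to Y with |Y| = 2^ℓ and Σ_x W(y|x) > 0 for all y, then trace(H(W)) ≤ 2^ℓ, where H(W) is defined as H(W)_{i₁,i₂} = Σ_y (W(y|2i₁−1)−W(y|2i₁))(W(y|2i₂−1)−W(y|2i₂)) / Σ_x W(y|x). -/
/-- The matrix `H(W)` associated to a channel `W` from `[k]` (with `k = 2m`). -/
noncomputable def Hmat {Y : Type*} [Fintype Y] (m : ℕ) (W : Fin m × Bool → Y → ℝ) :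
    Matrix (Fin m) (Fin m) ℝ :=
  Matrix.of fun i₁ i₂ => ∑ y,
    (W (i₁, false) y - W (i₁, true) y) * (W (i₂, false) y - W (i₂, true) y) / ∑ x, W x y

/-- Trace bound for communication-limited channels: if `|Y| = 2^ℓ` then
`trace(H(W)) ≤ 2^ℓ`. -/
theorem Hmat_trace_le_comm {Y : Type*} [Fintype Y] (m ℓ : ℕ)
    (hY : Fintype.card Y = 2 ^ ℓ) (W : Fin m × Bool → Y → ℝ)
    (hW0 : ∀ x y, 0 ≤ W x y) (hW1 : ∀ x, ∑ y, W x y = 1)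
    (hWy : ∀ y, 0 < ∑ x, W x y) :
    Matrix.trace (Hmat m W) ≤ (2 : ℝ) ^ ℓ := by
  have hle1 : ∀ x y, W x y ≤ 1 := fun x y => by
    calc W x y ≤ ∑ y', W x y' :=
          Finset.single_le_sum (fun y' _ => hW0 x y') (Finset.mem_univ y)
      _ = 1 := hW1 x
  have key : ∀ y : Y, ∑ i : Fin m,
      (W (i, false) y - W (i, true) y) * (W (i, false) y - W (i, true) y)
      ≤ ∑ x, W x y := by
    intro y
    rw [Fintype.sum_prod_type]
    apply Finset.sum_le_sum
    intro i _
    rw [Fintype.sum_bool]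
    nlinarith [hW0 (i, false) y, hW0 (i, true) y, hle1 (i, false) y, hle1 (i, true) y]
  have htr : Matrix.trace (Hmat m W) = ∑ y : Y,
      (∑ i : Fin m, (W (i, false) y - W (i, true) y) * (W (i, false) y - W (i, true) y))
        / ∑ x, W x y := by
    simp only [Matrix.trace, Matrix.diag, Hmat, Matrix.of_apply]
    rw [Finset.sum_comm]
    exact Finset.sum_congr rfl fun y _ => (Finset.sum_div _ _ _).symm
  rw [htr]
  calc (∑ y : Y,
      (∑ i : Fin m, (W (i, false) y - W (i, true) y) * (W (i, false) y - W (i, true) y))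
        / ∑ x, W x y) ≤ ∑ _y : Y, (1 : ℝ) := by
        apply Finset.sum_le_sum
        intro y _
        rw [div_le_one (hWy y)]
        exact key y
    _ = (2 : ℝ) ^ ℓ := by simp [hY]
end

section
/- Frobenius norm bound for communication-limited channels: if W is a channel from [k] to Y with |Y| = 2^ℓ and Σ_x W(y|x) > 0 for all y, then ‖H(W)‖_F² ≤ 2^{ℓ+1}. -/
/-!
Writing `d_y(i) = W(y|2i-1) - W(y|2i)` and `S_y = Σ_x W(y|x)`, the matrix is
`H = Σ_y d_y d_yᵀ / S_y`, so `‖H‖_F² = tr(H²) = Σ_y (d_yᵀ H d_y) / S_y`.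
Since `|d_y(i)| ≤ p_y(i) := W(y|2i-1) + W(y|2i)` and `Σ_i p_y(i) = S_y`, weighted Cauchy–Schwarz gives
`(vᵀ d_y)² / S_y ≤ Σ_i v_i² p_y(i)`, and summing over `y` (where `Σ_y p_y(i) = 2`) yields
`vᵀ H v ≤ 2 ‖v‖²`. Together with `‖d_y‖² ≤ S_y` each of the `2^ℓ` terms is at most `2`.
-/

section WeightedGram

variable {ι Y : Type*} [Fintype ι] [Fintype Y]

noncomputable def weightedGram (d : ι → Y → ℝ) (S : Y → ℝ) : Matrix ι ι ℝ :=
  Matrix.of fun i j => ∑ y, d i y * d j y / S y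

theorem sum_mul_weightedGram (d : ι → Y → ℝ) (S : Y → ℝ) (A : ι → ι → ℝ) :
    ∑ i, ∑ j, A i j * weightedGram d S i j =
      ∑ y, (∑ i, ∑ j, d i y * d j y * A i j) / S y := by
  simp only [weightedGram, Matrix.of_apply, Finset.mul_sum, Finset.sum_div]
  symm
  rw [Finset.sum_comm]
  refine Finset.sum_congr rfl fun i _ => ?_
  rw [Finset.sum_comm]
  exact Finset.sum_congr rfl fun j _ => Finset.sum_congr rfl fun y _ => by ring

theorem sum_mul_mul_weightedGram (d : ι → Y → ℝ) (S : Y → ℝ) (v : ι → ℝ) :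
    ∑ i, ∑ j, v i * v j * weightedGram d S i j = ∑ y, (∑ i, v i * d i y) ^ 2 / S y := by
  refine (sum_mul_weightedGram d S fun i j => v i * v j).trans ?_
  simp only [sq, Finset.sum_mul_sum]
  exact Finset.sum_congr rfl fun y _ => by
    congr 1
    exact Finset.sum_congr rfl fun i _ => Finset.sum_congr rfl fun j _ => by ring

theorem sq_sum_mul_le_of_abs_le (v d p : ι → ℝ) (hp : ∀ i, 0 ≤ p i) (hd : ∀ i, |d i| ≤ p i) :
    (∑ i, v i * d i) ^ 2 ≤ (∑ i, v i ^ 2 * p i) * ∑ i, p i :=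
  Finset.sum_sq_le_sum_mul_sum_of_sq_le_mul _ (fun i _ => mul_nonneg (sq_nonneg _) (hp i))
    (fun i _ => hp i) fun i _ => by
      have hdp : d i ^ 2 ≤ p i ^ 2 := sq_le_sq' (abs_le.mp (hd i)).1 (abs_le.mp (hd i)).2
      rw [mul_pow, mul_assoc, ← sq]
      exact mul_le_mul_of_nonneg_left hdp (sq_nonneg _)

variable {d p : ι → Y → ℝ} {S : Y → ℝ} {c : ℝ}

theorem sum_sq_div_le_of_abs_le (hp : ∀ i y, 0 ≤ p i y) (hd : ∀ i y, |d i y| ≤ p i y)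
    (hS : ∀ y, S y = ∑ i, p i y) (hc : ∀ i, ∑ y, p i y ≤ c) (v : ι → ℝ) :
    ∑ y, (∑ i, v i * d i y) ^ 2 / S y ≤ c * ∑ i, v i ^ 2 := by
  have pointwise : ∀ y, (∑ i, v i * d i y) ^ 2 / S y ≤ ∑ i, v i ^ 2 * p i y := fun y =>
    div_le_of_le_mul₀ (hS y ▸ Finset.sum_nonneg fun i _ => hp i y)
      (Finset.sum_nonneg fun i _ => mul_nonneg (sq_nonneg _) (hp i y))
      (hS y ▸ sq_sum_mul_le_of_abs_le _ _ _ (hp · y) (hd · y))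
  calc ∑ y, (∑ i, v i * d i y) ^ 2 / S y ≤ ∑ y, ∑ i, v i ^ 2 * p i y :=
        Finset.sum_le_sum fun y _ => pointwise y
    _ = ∑ i, v i ^ 2 * ∑ y, p i y := by rw [Finset.sum_comm]; simp only [Finset.mul_sum]
    _ ≤ ∑ i, v i ^ 2 * c := Finset.sum_le_sum fun i _ => mul_le_mul_of_nonneg_left (hc i) (sq_nonneg _)
    _ = c * ∑ i, v i ^ 2 := by rw [← Finset.sum_mul, mul_comm]

theorem sum_weightedGram_sq_le (hp : ∀ i y, 0 ≤ p i y) (hd : ∀ i y, |d i y| ≤ p i y)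
    (hd2 : ∀ i y, d i y ^ 2 ≤ p i y) (hS : ∀ y, S y = ∑ i, p i y) (hc : ∀ i, ∑ y, p i y ≤ c)
    (hc0 : 0 ≤ c) :
    ∑ i, ∑ j, weightedGram d S i j ^ 2 ≤ c * Fintype.card Y := by
  have term_le : ∀ y, (∑ i, ∑ j, d i y * d j y * weightedGram d S i j) / S y ≤ c := by
    intro y
    rw [sum_mul_mul_weightedGram]
    refine div_le_of_le_mul₀ (hS y ▸ Finset.sum_nonneg fun i _ => hp i y) hc0 ?_
    calc _ ≤ c * ∑ i, d i y ^ 2 := sum_sq_div_le_of_abs_le hp hd hS hc _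
      _ ≤ c * S y := mul_le_mul_of_nonneg_left (hS y ▸ Finset.sum_le_sum fun i _ => hd2 i y) hc0
  simp only [sq]
  rw [sum_mul_weightedGram d S (weightedGram d S), mul_comm, ← nsmul_eq_mul, ← Finset.card_univ]
  exact Finset.sum_le_card_nsmul _ _ _ fun y _ => term_le y

end WeightedGram

theorem abs_sub_le_add_of_nonneg {α : Type*} [AddCommGroup α] [LinearOrder α]
    [IsOrderedAddMonoid α] {a b : α} (ha : 0 ≤ a) (hb : 0 ≤ b) : |a - b| ≤ a + b :=
  (abs_sub a b).trans_eq (by rw [abs_of_nonneg ha, abs_of_nonneg hb])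

theorem sq_sub_le_add_of_le_one {α : Type*} [CommRing α] [LinearOrder α] [IsStrictOrderedRing α]
    {a b : α} (ha : 0 ≤ a) (hb : 0 ≤ b) (ha1 : a ≤ 1) (hb1 : b ≤ 1) : (a - b) ^ 2 ≤ a + b := by
  nlinarith [mul_nonneg ha hb, mul_le_of_le_one_left ha ha1, mul_le_of_le_one_left hb hb1]

theorem Hmat_frobenius_sq_le_comm_general {Y : Type*} [Fintype Y] (m ℓ : ℕ)
    (hY : Fintype.card Y = 2 ^ ℓ) (W : Fin m × Bool → Y → ℝ)
    (hW0 : ∀ x y, 0 ≤ W x y) (hW1 : ∀ x, ∑ y, W x y = 1) :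
    ∑ i₁, ∑ i₂, (Hmat m W i₁ i₂) ^ 2 ≤ (2 : ℝ) ^ (ℓ + 1) := by
  have hW_le_one : ∀ x y, W x y ≤ 1 := fun x y =>
    hW1 x ▸ Finset.single_le_sum (fun y _ => hW0 x y) (Finset.mem_univ y)
  have hS : ∀ y, ∑ x, W x y = ∑ i, (W (i, false) y + W (i, true) y) := fun y => by
    simp only [Fintype.sum_prod_type, Fintype.sum_bool, add_comm]
  have hp : ∀ i, ∑ y, (W (i, false) y + W (i, true) y) ≤ 2 := fun i => by
    rw [Finset.sum_add_distrib, hW1, hW1]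
    norm_num
  calc ∑ i₁, ∑ i₂, (Hmat m W i₁ i₂) ^ 2 ≤ 2 * Fintype.card Y :=
        sum_weightedGram_sq_le (d := fun i y => W (i, false) y - W (i, true) y)
          (fun i y => add_nonneg (hW0 _ _) (hW0 _ _))
          (fun i y => abs_sub_le_add_of_nonneg (hW0 _ _) (hW0 _ _))
          (fun i y => sq_sub_le_add_of_le_one (hW0 _ _) (hW0 _ _) (hW_le_one _ _) (hW_le_one _ _))
          hS hp zero_le_two
    _ = 2 ^ (ℓ + 1) := by rw [hY, pow_succ]; push_cast; ring

/-- Frobenius norm bound for communication-limited channels: if `|Y| = 2^ℓ` then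
`‖H(W)‖_F² ≤ 2^{ℓ+1}`. -/
theorem Hmat_frobenius_sq_le_comm {Y : Type*} [Fintype Y] (m ℓ : ℕ)
    (hY : Fintype.card Y = 2 ^ ℓ) (W : Fin m × Bool → Y → ℝ)
    (hW0 : ∀ x y, 0 ≤ W x y) (hW1 : ∀ x, ∑ y, W x y = 1)
    (hWy : ∀ y, 0 < ∑ x, W x y) :
    ∑ i₁, ∑ i₂, (Hmat m W i₁ i₂) ^ 2 ≤ (2 : ℝ) ^ (ℓ + 1) :=
  Hmat_frobenius_sq_le_comm_general m ℓ hY W hW0 hW1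
end

section
/- Trace bound for LDP channels: if W is an ε-LDP channel from [k] (k even) to a finite set Y with all W(y|x) > 0, then trace(H(W)) ≤ (e^ε − 1)²/2, where H(W)_{i₁,i₂} = Σ_y (W(y|2i₁−1)−W(y|2i₁))(W(y|2i₂−1)−W(y|2i₂)) / Σ_x W(y|x). -/
/-- Trace bound for ε-LDP channels: `trace(H(W)) ≤ (e^ε − 1)²/2`. -/
theorem Hmat_trace_le_ldp {Y : Type*} [Fintype Y] (m : ℕ)
    (W : Fin m × Bool → Y → ℝ) (ε : ℝ) (hε : 0 < ε)
    (hW0 : ∀ x y, 0 < W x y) (hW1 : ∀ x, ∑ y, W x y = 1)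
    (hLDP : ∀ x₁ x₂ y, W x₁ y ≤ Real.exp ε * W x₂ y) :
    Matrix.trace (Hmat m W) ≤ (Real.exp ε - 1) ^ 2 / 2 := by
  have hrhs : (0:ℝ) ≤ (Real.exp ε - 1) ^ 2 / 2 := by positivity
  rcases Nat.eq_zero_or_pos m with hm | hm
  · subst hm
    simpa [Matrix.trace, Hmat] using hrhs
  haveI : Nonempty (Fin m) := ⟨⟨0, hm⟩⟩
  have hne : (Finset.univ : Finset (Fin m × Bool)).Nonempty := Finset.univ_nonempty
  set c : Y → ℝ := fun y => Finset.univ.inf' hne (fun x => W x y) with hc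
  have hcle : ∀ y x, c y ≤ W x y := fun y x => Finset.inf'_le _ (Finset.mem_univ x)
  have hcpos : ∀ y, 0 < c y := by
    intro y
    obtain ⟨x, -, hx⟩ := Finset.exists_mem_eq_inf' hne (fun x => W x y)
    show 0 < Finset.univ.inf' hne fun x => W x y
    rw [hx]; exact hW0 x y
  have hupper : ∀ y x, W x y ≤ Real.exp ε * c y := by
    intro y x
    obtain ⟨x', -, hx'⟩ := Finset.exists_mem_eq_inf' hne (fun x => W x y)
    have := hLDP x x' y
    simpa [hc, hx'] using this
  have hDpos : ∀ y, 0 < ∑ x, W x y := fun y =>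
    Finset.sum_pos (fun x _ => hW0 x y) hne
  have hDge : ∀ y, (2 * m : ℝ) * c y ≤ ∑ x, W x y := by
    intro y
    have := Finset.card_nsmul_le_sum Finset.univ (fun x => W x y) (c y)
      (fun x _ => hcle y x)
    simpa [Finset.card_univ, mul_comm, nsmul_eq_mul, mul_comm (2:ℝ) (m:ℝ)] using this
  have hdiff : ∀ y i, (W (i, false) y - W (i, true) y) ^ 2 ≤ ((Real.exp ε - 1) * c y) ^ 2 := by
    intro y i
    have h1 : W (i, false) y - W (i, true) y ≤ (Real.exp ε - 1) * c y := by
      have := hupper y (i, false); have := hcle y (i, true); nlinarith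
    have h2 : -((Real.exp ε - 1) * c y) ≤ W (i, false) y - W (i, true) y := by
      have := hupper y (i, true); have := hcle y (i, false); nlinarith
    exact sq_le_sq' h2 h1
  -- trace as a double sum
  have htr : Matrix.trace (Hmat m W) =
      ∑ y, (∑ i : Fin m, (W (i, false) y - W (i, true) y) ^ 2) / ∑ x, W x y := by
    rw [Matrix.trace]
    simp only [Hmat, Matrix.diag, Matrix.of_apply]
    rw [Finset.sum_comm]
    refine Finset.sum_congr rfl fun y _ => ?_
    rw [← Finset.sum_div]
    congr 1
    exact Finset.sum_congr rfl fun i _ => by ring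
  rw [htr]
  have key : ∀ y, (∑ i : Fin m, (W (i, false) y - W (i, true) y) ^ 2) / (∑ x, W x y)
      ≤ (Real.exp ε - 1) ^ 2 / 2 * c y := by
    intro y
    have hnum : (∑ i : Fin m, (W (i, false) y - W (i, true) y) ^ 2)
        ≤ (m : ℝ) * ((Real.exp ε - 1) * c y) ^ 2 := by
      have := Finset.sum_le_card_nsmul Finset.univ
        (fun i => (W (i, false) y - W (i, true) y) ^ 2)
        (((Real.exp ε - 1) * c y) ^ 2) (fun i _ => hdiff y i)
      simpa [Finset.card_univ, nsmul_eq_mul] using this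
    have h1 : (∑ i : Fin m, (W (i, false) y - W (i, true) y) ^ 2) / (∑ x, W x y)
        ≤ ((m : ℝ) * ((Real.exp ε - 1) * c y) ^ 2) / ((2 * m : ℝ) * c y) := by
      apply div_le_div₀ (by positivity) hnum
      · have hmpos : (0:ℝ) < (m:ℝ) := by exact_mod_cast hm
        exact mul_pos (by nlinarith) (hcpos y)
      · exact hDge y
    refine h1.trans_eq ?_
    have hmne : (m:ℝ) ≠ 0 := by exact_mod_cast hm.ne'
    have hcne : c y ≠ 0 := (hcpos y).ne'
    field_simp
  calc ∑ y, (∑ i : Fin m, (W (i, false) y - W (i, true) y) ^ 2) / (∑ x, W x y)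
      ≤ ∑ y, (Real.exp ε - 1) ^ 2 / 2 * c y := Finset.sum_le_sum fun y _ => key y
    _ = (Real.exp ε - 1) ^ 2 / 2 * ∑ y, c y := by rw [← Finset.mul_sum]
    _ ≤ (Real.exp ε - 1) ^ 2 / 2 * 1 := by
        refine mul_le_mul_of_nonneg_left ?_ hrhs
        calc ∑ y, c y ≤ ∑ y, W (⟨0, hm⟩, false) y :=
              Finset.sum_le_sum fun y _ => hcle y _
          _ = 1 := hW1 _
    _ = (Real.exp ε - 1) ^ 2 / 2 := mul_one _
end

section
/- Let V be a real (k/2)×(k/4) matrix whose columns are orthonormal vectors (k divisible by 4), and let Y be uniform on {−1,1}^{k/4}, Z = VY. Then E[‖Z‖₁] ≥ k/(4√2), E[‖Z‖₁²] ≤ k²/8, and consequently P(‖Z‖₁ ≥ k/(12√2)) ≥ 1/9. -/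
open Matrix

open scoped Classical


open Matrix
open scoped Classical

lemma sgn_mul_self (b : Bool) : sgn b * sgn b = 1 := by
  cases b <;> simp [sgn]

lemma sgn_not (b : Bool) : sgn (!b) = - sgn b := by
  cases b <;> simp [sgn]

lemma abs_sgn (b : Bool) : |sgn b| = 1 := by
  cases b <;> simp [sgn]

namespace Khin
open Finset
variable {n : ℕ}

noncomputable def chi (A : Finset (Fin n)) (s : Fin n → Bool) : ℝ := ∏ i ∈ A, sgn (s i)

noncomputable def coef (f : (Fin n → Bool) → ℝ) (A : Finset (Fin n)) : ℝ :=
  ∑ s, f s * chi A s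

lemma chi_delta (s t : Fin n → Bool) :
    ∑ A : Finset (Fin n), chi A s * chi A t = if s = t then (2:ℝ)^n else 0 := by
  have h1 : ∀ A : Finset (Fin n), chi A s * chi A t = ∏ i ∈ A, (sgn (s i) * sgn (t i)) := by
    intro A; rw [chi, chi, ← Finset.prod_mul_distrib]
  simp_rw [h1]
  have h2 : ∑ A : Finset (Fin n), ∏ i ∈ A, (sgn (s i) * sgn (t i))
      = ∏ i : Fin n, (sgn (s i) * sgn (t i) + 1) := by
    rw [Finset.prod_add]
    rw [Finset.powerset_univ]
    apply Finset.sum_congr rfl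
    intro A _
    simp
  rw [h2]
  by_cases hst : s = t
  · subst hst
    simp [sgn_mul_self, if_pos rfl]
    norm_num
  · rw [if_neg hst]
    obtain ⟨j, hj⟩ : ∃ j, s j ≠ t j := by
      by_contra h
      push_neg at h
      exact hst (funext h)
    apply Finset.prod_eq_zero (Finset.mem_univ j)
    have : sgn (s j) * sgn (t j) = -1 := by
      cases hs : s j <;> cases ht : t j <;> simp_all [sgn]
    rw [this]; ring

lemma expansion (f : (Fin n → Bool) → ℝ) (s : Fin n → Bool) :
    ∑ A : Finset (Fin n), coef f A * chi A s = 2^n * f s := by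
  simp_rw [coef, Finset.sum_mul]
  rw [Finset.sum_comm]
  have : ∀ t, ∑ A : Finset (Fin n), f t * chi A t * chi A s
      = f t * (if t = s then (2:ℝ)^n else 0) := by
    intro t
    rw [← chi_delta t s, Finset.mul_sum]
    simp [mul_assoc]
  simp_rw [this]
  simp [mul_comm]

lemma parseval (f g : (Fin n → Bool) → ℝ) :
    ∑ A : Finset (Fin n), coef f A * coef g A = 2^n * ∑ s, f s * g s := by
  have : ∀ A, coef f A * coef g A = ∑ s, g s * (coef f A * chi A s) := by
    intro A
    rw [show coef g A = ∑ s, g s * chi A s from rfl, Finset.mul_sum]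
    exact Finset.sum_congr rfl fun s _ => by ring
  simp_rw [this]
  rw [Finset.sum_comm]
  have : ∀ s, ∑ A : Finset (Fin n), g s * (coef f A * chi A s) = g s * (2^n * f s) := by
    intro s
    rw [← Finset.mul_sum, expansion]
  simp_rw [this]
  rw [Finset.mul_sum]
  apply Finset.sum_congr rfl; intro s _; ring

/-- negation equiv on the cube -/
def negE : (Fin n → Bool) ≃ (Fin n → Bool) :=
  Function.Involutive.toPerm (fun s => fun j => !(s j)) (by intro s; funext j; simp)

lemma negE_apply (s : Fin n → Bool) (j : Fin n) : (negE s) j = !(s j) := rfl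

/-- coordinate flip equiv on the cube -/
def flipE (i : Fin n) : (Fin n → Bool) ≃ (Fin n → Bool) :=
  Function.Involutive.toPerm (fun s => Function.update s i (!(s i))) (by
    intro s; funext j
    by_cases h : j = i
    · subst h; simp
    · simp [Function.update_of_ne h])

lemma flipE_same (i : Fin n) (s : Fin n → Bool) : (flipE i s) i = !(s i) := by
  simp [flipE, Function.Involutive.toPerm]

lemma flipE_other (i j : Fin n) (s : Fin n → Bool) (h : j ≠ i) : (flipE i s) j = s j := by
  simp [flipE, Function.Involutive.toPerm, Function.update_of_ne h]

section Main
variable (a : Fin n → ℝ)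

noncomputable def S (s : Fin n → Bool) : ℝ := ∑ i, a i * sgn (s i)
noncomputable def f (s : Fin n → Bool) : ℝ := |S a s|

lemma S_flip (i : Fin n) (s : Fin n → Bool) :
    S a (flipE i s) = S a s - 2 * a i * sgn (s i) := by
  have h : ∀ j : Fin n, a j * sgn ((flipE i) s j)
      = a j * sgn (s j) - (if j = i then 2 * a i * sgn (s i) else 0) := by
    intro j
    by_cases hj : j = i
    · subst hj; rw [flipE_same, sgn_not, if_pos rfl]; ring
    · rw [flipE_other i j s hj, if_neg hj]; ring
  rw [S, S]
  simp_rw [h]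
  rw [Finset.sum_sub_distrib, Finset.sum_ite_eq' Finset.univ i (fun _ => 2 * a i * sgn (s i))]
  simp

lemma S_neg (s : Fin n → Bool) : S a (negE s) = - S a s := by
  rw [S, S, ← Finset.sum_neg_distrib]
  apply Finset.sum_congr rfl
  intro j _
  rw [negE_apply, sgn_not]; ring

lemma sum_sgn_sgn (i j : Fin n) :
    ∑ s : Fin n → Bool, sgn (s i) * sgn (s j) = if i = j then (2:ℝ)^n else 0 := by
  by_cases hij : i = j
  · subst hij
    simp_rw [sgn_mul_self]
    simp [Finset.card_univ]
  · rw [if_neg hij]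
    have h := Equiv.sum_comp (flipE i) (fun s => sgn (s i) * sgn (s j))
    have h2 : ∀ s : Fin n → Bool, sgn ((flipE i s) i) * sgn ((flipE i s) j)
        = - (sgn (s i) * sgn (s j)) := by
      intro s
      rw [flipE_same, flipE_other i j s (Ne.symm hij), sgn_not]; ring
    simp_rw [h2] at h
    rw [Finset.sum_neg_distrib] at h
    linarith [h]

lemma sum_S_sq : ∑ s, (S a s)^2 = 2^n * ∑ i, (a i)^2 := by
  have h1 : ∀ s, (S a s)^2 = ∑ i, ∑ j, (a i * a j) * (sgn (s i) * sgn (s j)) := by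
    intro s
    rw [sq, S, Finset.sum_mul_sum]
    apply Finset.sum_congr rfl; intro i _
    apply Finset.sum_congr rfl; intro j _; ring
  simp_rw [h1]
  rw [Finset.sum_comm]
  have h2 : ∀ i, ∑ s : Fin n → Bool, ∑ j, (a i * a j) * (sgn (s i) * sgn (s j))
      = 2^n * (a i)^2 := by
    intro i
    rw [Finset.sum_comm]
    have h3 : ∀ j, ∑ s : Fin n → Bool, (a i * a j) * (sgn (s i) * sgn (s j))
        = (a i * a j) * (if i = j then (2:ℝ)^n else 0) := by
      intro j
      rw [← Finset.mul_sum, sum_sgn_sgn]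
    simp_rw [h3, mul_ite, mul_zero]
    rw [Finset.sum_ite_eq Finset.univ i (fun x => a i * a x * 2^n)]
    rw [if_pos (Finset.mem_univ i)]
    ring
  simp_rw [h2]
  rw [← Finset.mul_sum]

lemma coef_singleton (i : Fin n) : coef (f a) {i} = 0 := by
  have h := Equiv.sum_comp (negE) (fun s => f a s * chi {i} s)
  have h2 : ∀ s : Fin n → Bool, f a (negE s) * chi {i} (negE s)
      = - (f a s * chi {i} s) := by
    intro s
    have hf : f a (negE s) = f a s := by rw [f, f, S_neg, abs_neg]
    have hc : chi {i} (negE s) = - chi {i} s := by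
      rw [chi, chi, Finset.prod_singleton, Finset.prod_singleton, negE_apply, sgn_not]
    rw [hf, hc]; ring
  simp_rw [h2] at h
  rw [Finset.sum_neg_distrib] at h
  have : coef (f a) {i} = ∑ s, f a s * chi {i} s := rfl
  rw [this]
  linarith [h]

lemma chi_flip (i : Fin n) (A : Finset (Fin n)) (s : Fin n → Bool) :
    chi A (flipE i s) = (if i ∈ A then -1 else 1) * chi A s := by
  by_cases hi : i ∈ A
  · rw [if_pos hi, chi, chi, ← Finset.mul_prod_erase A _ hi, ← Finset.mul_prod_erase A _ hi]
    rw [flipE_same, sgn_not]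
    have : ∀ j ∈ A.erase i, sgn ((flipE i s) j) = sgn (s j) := by
      intro j hj
      rw [flipE_other i j s (Finset.ne_of_mem_erase hj)]
    rw [Finset.prod_congr rfl this]
    ring
  · rw [if_neg hi, one_mul, chi, chi]
    apply Finset.prod_congr rfl
    intro j hj
    rw [flipE_other i j s (by rintro rfl; exact hi hj)]

lemma coef_flip_fn (i : Fin n) (A : Finset (Fin n)) :
    coef (fun s => f a (flipE i s)) A = (if i ∈ A then -1 else 1) * coef (f a) A := by
  have h := Equiv.sum_comp (flipE i) (fun s => f a (flipE i s) * chi A s)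
  have h2 : ∀ s : Fin n → Bool, f a (flipE i (flipE i s)) * chi A (flipE i s)
      = f a s * ((if i ∈ A then -1 else 1) * chi A s) := by
    intro s
    have hinv : flipE i (flipE i s) = s := (flipE i).left_inv s
    rw [hinv, chi_flip]
  simp_rw [h2] at h
  have : coef (fun s => f a (flipE i s)) A = ∑ s, f a (flipE i s) * chi A s := rfl
  rw [this, ← h, coef, Finset.mul_sum]
  exact Finset.sum_congr rfl fun s _ => by ring

lemma deriv_bound (i : Fin n) :
    ∑ A ∈ Finset.univ.filter (fun A : Finset (Fin n) => i ∈ A), (coef (f a) A)^2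
      ≤ ((2:ℝ)^n)^2 * (a i)^2 := by
  set g : (Fin n → Bool) → ℝ := fun s => f a s - f a (flipE i s) with hg
  have hcg : ∀ A, coef g A = (if i ∈ A then 2 else 0) * coef (f a) A := by
    intro A
    have : coef g A = coef (f a) A - coef (fun s => f a (flipE i s)) A := by
      rw [coef, coef, coef, ← Finset.sum_sub_distrib]
      apply Finset.sum_congr rfl; intro s _; rw [hg]; ring
    rw [this, coef_flip_fn]
    by_cases hi : i ∈ A
    · simp only [if_pos hi]; ring
    · simp only [if_neg hi]; ring
  have hpw : ∀ s, (g s)^2 ≤ 4 * (a i)^2 := by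
    intro s
    have h1 : |g s| ≤ 2 * |a i| := by
      rw [hg]
      calc |f a s - f a (flipE i s)| ≤ |S a s - S a (flipE i s)| := by
            exact abs_abs_sub_abs_le_abs_sub _ _
        _ = |2 * a i * sgn (s i)| := by rw [S_flip]; ring_nf
        _ = 2 * |a i| := by rw [abs_mul, abs_sgn, mul_one, abs_mul]; simp
    have h2 := pow_le_pow_left₀ (abs_nonneg (g s)) h1 2
    rw [sq_abs] at h2
    calc (g s)^2 ≤ (2*|a i|)^2 := h2
      _ = 4 * (a i)^2 := by rw [mul_pow, sq_abs]; norm_num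
  have hpar := parseval g g
  have hL : ∑ A : Finset (Fin n), coef g A * coef g A
      = 4 * ∑ A ∈ Finset.univ.filter (fun A : Finset (Fin n) => i ∈ A), (coef (f a) A)^2 := by
    have e : ∀ A : Finset (Fin n), coef g A * coef g A
        = if i ∈ A then 4 * (coef (f a) A)^2 else 0 := by
      intro A
      rw [hcg]
      by_cases hi : i ∈ A
      · rw [if_pos hi, if_pos hi]; ring
      · rw [if_neg hi, if_neg hi]; ring
    simp_rw [e]
    rw [← Finset.sum_filter, Finset.mul_sum]
  have hR : (2:ℝ)^n * ∑ s, g s * g s ≤ (2:ℝ)^n * (2^n * (4 * (a i)^2)) := by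
    apply mul_le_mul_of_nonneg_left _ (by positivity)
    calc ∑ s, g s * g s ≤ ∑ s : Fin n → Bool, 4 * (a i)^2 := by
          apply Finset.sum_le_sum; intro s _; rw [← sq]; exact hpw s
      _ = 2^n * (4 * (a i)^2) := by simp [Finset.card_univ]
  rw [hpar] at hL
  nlinarith [hL, hR]

theorem khintchine :
    ((2:ℝ)^n)^2 * ((∑ i, (a i)^2) / 2) ≤ (∑ s, |S a s|)^2 := by
  have hpar := parseval (f a) (f a)
  have hff : ∀ s, f a s * f a s = (S a s)^2 := by
    intro s; rw [f, ← abs_mul, abs_mul_self, sq]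
  simp_rw [hff] at hpar
  rw [sum_S_sq] at hpar
  have hsplit : ∑ A : Finset (Fin n), coef (f a) A * coef (f a) A
      = (coef (f a) ∅)^2 + ∑ A ∈ Finset.univ.filter (fun A : Finset (Fin n) => A ≠ ∅), (coef (f a) A)^2 := by
    simp_rw [← sq]
    rw [← Finset.add_sum_erase Finset.univ _ (Finset.mem_univ ∅)]
    congr 1
    apply Finset.sum_congr
    · ext A; simp [Finset.mem_erase, Finset.mem_filter, ne_comm]
    · intros; rfl
  have hcoef_empty : coef (f a) ∅ = ∑ s : Fin n → Bool, |S a s| := by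
    rw [coef]; apply Finset.sum_congr rfl; intro s _; rw [chi, Finset.prod_empty, mul_one]; rfl
  have hne : ∑ A ∈ Finset.univ.filter (fun A : Finset (Fin n) => A ≠ ∅), (coef (f a) A)^2
      ≤ (1/2) * ∑ A : Finset (Fin n), (A.card : ℝ) * (coef (f a) A)^2 := by
    rw [Finset.mul_sum, ← Finset.sum_filter_add_sum_filter_not Finset.univ (fun A : Finset (Fin n) => A ≠ ∅)]
    have hpos : ∀ A ∈ Finset.univ.filter (fun A : Finset (Fin n) => ¬ A ≠ ∅), (0:ℝ) ≤ 1/2 * ((A.card : ℝ) * (coef (f a) A)^2) := by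
      intro A _; positivity
    have hmain : ∑ A ∈ Finset.univ.filter (fun A : Finset (Fin n) => A ≠ ∅), (coef (f a) A)^2
        ≤ ∑ A ∈ Finset.univ.filter (fun A : Finset (Fin n) => A ≠ ∅), 1/2 * ((A.card : ℝ) * (coef (f a) A)^2) := by
      apply Finset.sum_le_sum
      intro A hA
      rw [Finset.mem_filter] at hA
      rcases Nat.lt_or_ge A.card 2 with hc | hc
      · interval_cases h : A.card
        · exact absurd (Finset.card_eq_zero.mp h) hA.2
        · obtain ⟨i, rfl⟩ := Finset.card_eq_one.mp h
          rw [coef_singleton]; simp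
      · have : (2:ℝ) ≤ (A.card : ℝ) := by exact_mod_cast hc
        nlinarith [sq_nonneg (coef (f a) A)]
    exact le_trans hmain (le_add_of_le_of_nonneg le_rfl (Finset.sum_nonneg hpos))
  have hcard : ∑ A : Finset (Fin n), (A.card : ℝ) * (coef (f a) A)^2
      = ∑ i : Fin n, ∑ A ∈ Finset.univ.filter (fun A : Finset (Fin n) => i ∈ A), (coef (f a) A)^2 := by
    have h1 : ∀ A : Finset (Fin n), (A.card : ℝ) * (coef (f a) A)^2
        = ∑ i : Fin n, (if i ∈ A then (coef (f a) A)^2 else 0) := by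
      intro A
      rw [Finset.sum_ite_mem, Finset.univ_inter, Finset.sum_const, nsmul_eq_mul]
    simp_rw [h1]
    rw [Finset.sum_comm]
    apply Finset.sum_congr rfl
    intro i _
    rw [Finset.sum_filter]
  have hd : ∑ i : Fin n, ∑ A ∈ Finset.univ.filter (fun A : Finset (Fin n) => i ∈ A), (coef (f a) A)^2
      ≤ ((2:ℝ)^n)^2 * ∑ i, (a i)^2 := by
    rw [Finset.mul_sum]
    apply Finset.sum_le_sum; intro i _; exact deriv_bound a i
  have hRle : ∑ A ∈ Finset.univ.filter (fun A : Finset (Fin n) => A ≠ ∅), (coef (f a) A)^2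
      ≤ 1/2 * (((2:ℝ)^n)^2 * ∑ i, (a i)^2) := by
    refine le_trans hne ?_
    rw [hcard]
    nlinarith [hd]
  have hp2 : ((2:ℝ)^n)^2 = 2^n * 2^n := sq ((2:ℝ)^n)
  rw [hcoef_empty] at hsplit
  nlinarith [hpar, hsplit, hRle, hp2]

end Main

-- corollary of khintchine for rows with norm at most 1
lemma khin_row {n : ℕ} (a : Fin n → ℝ) (h1 : ∑ i, (a i)^2 ≤ 1) :
    (2:ℝ)^n * ((∑ i, (a i)^2) / Real.sqrt 2) ≤ ∑ s : Fin n → Bool, |∑ i, a i * sgn (s i)| := by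
  have hk := khintchine a
  have hw0 : (0:ℝ) ≤ ∑ i, (a i)^2 := Finset.sum_nonneg fun i _ => sq_nonneg _
  have hF0 : (0:ℝ) ≤ ∑ s : Fin n → Bool, |S a s| :=
    Finset.sum_nonneg fun s _ => abs_nonneg _
  have hFS : (∑ s : Fin n → Bool, |∑ i, a i * sgn (s i)|) = ∑ s : Fin n → Bool, |S a s| := rfl
  rw [hFS]
  set c := (2:ℝ)^n * ((∑ i, (a i)^2) / Real.sqrt 2) with hc
  have hc0 : 0 ≤ c := by rw [hc]; positivity
  have hc2 : c^2 ≤ (∑ s : Fin n → Bool, |S a s|)^2 := by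
    have he : c^2 = ((2:ℝ)^n)^2 * ((∑ i, (a i)^2)^2 / 2) := by
      rw [hc, mul_pow, div_pow, Real.sq_sqrt (by norm_num : (0:ℝ) ≤ 2)]
    rw [he]
    nlinarith [hk, mul_nonneg (sq_nonneg ((2:ℝ)^n)) (mul_nonneg hw0 (sub_nonneg.mpr h1))]
  calc c = Real.sqrt (c^2) := (Real.sqrt_sq hc0).symm
    _ ≤ Real.sqrt ((∑ s : Fin n → Bool, |S a s|)^2) := Real.sqrt_le_sqrt hc2
    _ = _ := Real.sqrt_sq hF0

end Khin

/-- For `V` a (k/2)×(k/4) matrix with orthonormal columns (`k = 4m`) and `Y` uniform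
on `{−1,1}^{k/4}`, `Z = VY` satisfies `E‖Z‖₁ ≥ k/(4√2)`, `E‖Z‖₁² ≤ k²/8`, and
`P(‖Z‖₁ ≥ k/(12√2)) ≥ 1/9`. -/
theorem orthonormal_rademacher_l1 (m : ℕ) (hm : 0 < m)
    (V : Matrix (Fin (2 * m)) (Fin m) ℝ) (hV : Vᵀ * V = 1) :
    (4 * m : ℝ) / (4 * Real.sqrt 2)
        ≤ (∑ s : Fin m → Bool, ∑ r, |V.mulVec (fun i => sgn (s i)) r|) / 2 ^ m ∧
    (∑ s : Fin m → Bool, (∑ r, |V.mulVec (fun i => sgn (s i)) r|) ^ 2) / 2 ^ m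
        ≤ (4 * m : ℝ) ^ 2 / 8 ∧
    (1 / 9 : ℝ) ≤ ((Finset.univ.filter fun s : Fin m → Bool =>
        (4 * m : ℝ) / (12 * Real.sqrt 2) ≤ ∑ r, |V.mulVec (fun i => sgn (s i)) r|).card : ℝ)
        / 2 ^ m := by
  have hs2 : Real.sqrt 2 * Real.sqrt 2 = 2 := Real.mul_self_sqrt (by norm_num)
  have hs2pos : (0:ℝ) < Real.sqrt 2 := Real.sqrt_pos.mpr (by norm_num)
  have hm1 : (1:ℝ) ≤ (m:ℝ) := by exact_mod_cast hm
  have hmv : ∀ (s : Fin m → Bool) (r : Fin (2*m)),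
      V.mulVec (fun i => sgn (s i)) r = ∑ i, V r i * sgn (s i) := by
    intro s r; rfl
  have hVij : ∀ i j : Fin m, ∑ r, V r i * V r j = if i = j then (1:ℝ) else 0 := by
    intro i j
    have h := congrFun (congrFun hV i) j
    rw [Matrix.mul_apply, Matrix.one_apply] at h
    simpa [Matrix.transpose_apply] using h
  -- row norms
  have hrow : ∀ r, ∑ i, (V r i)^2 ≤ 1 := by
    intro r
    set P := V * Vᵀ with hPdef
    have hPP : P * P = P := by
      rw [hPdef, Matrix.mul_assoc, ← Matrix.mul_assoc Vᵀ V Vᵀ, hV, Matrix.one_mul]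
    have hPsymm : Pᵀ = P := by
      rw [hPdef, Matrix.transpose_mul, Matrix.transpose_transpose]
    have hsymm : ∀ r' j, P j r' = P r' j := by
      intro r' j
      calc P j r' = Pᵀ r' j := (Matrix.transpose_apply P r' j).symm
        _ = P r' j := by rw [hPsymm]
    have hPrr : P r r = ∑ j, (P r j)^2 := by
      conv_lhs => rw [← hPP]
      rw [Matrix.mul_apply]
      apply Finset.sum_congr rfl
      intro j _
      rw [hsymm r j, sq]
    have hle : (P r r)^2 ≤ P r r := by
      conv_rhs => rw [hPrr]
      exact Finset.single_le_sum (fun j _ => sq_nonneg (P r j)) (Finset.mem_univ r)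
    have hP1 : P r r ≤ 1 := by nlinarith [hle]
    have : ∑ i, (V r i)^2 = P r r := by
      rw [hPdef, Matrix.mul_apply]
      apply Finset.sum_congr rfl
      intro i _
      rw [Matrix.transpose_apply, sq]
    rw [this]; exact hP1
  have hrow0 : ∀ r, (0:ℝ) ≤ ∑ i, (V r i)^2 :=
    fun r => Finset.sum_nonneg fun i _ => sq_nonneg _
  have htrace : ∑ r, ∑ i, (V r i)^2 = (m:ℝ) := by
    rw [Finset.sum_comm]
    have : ∀ i : Fin m, ∑ r, (V r i)^2 = 1 := by
      intro i
      have h := hVij i i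
      rw [if_pos rfl] at h
      rw [← h]
      apply Finset.sum_congr rfl
      intro r _
      rw [sq]
    simp_rw [this]
    simp
  -- pointwise ℓ2 norm of Z
  have hZ2 : ∀ s : Fin m → Bool, ∑ r, (∑ i, V r i * sgn (s i))^2 = (m:ℝ) := by
    intro s
    have h1 : ∀ r : Fin (2*m), (∑ i, V r i * sgn (s i))^2
        = ∑ i, ∑ j, (sgn (s i) * sgn (s j)) * (V r i * V r j) := by
      intro r
      rw [sq, Finset.sum_mul_sum]
      apply Finset.sum_congr rfl; intro i _
      apply Finset.sum_congr rfl; intro j _; ring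
    simp_rw [h1]
    rw [Finset.sum_comm]
    have h2 : ∀ i : Fin m, ∑ r, ∑ j, (sgn (s i) * sgn (s j)) * (V r i * V r j) = 1 := by
      intro i
      rw [Finset.sum_comm]
      have h3 : ∀ j : Fin m, ∑ r, (sgn (s i) * sgn (s j)) * (V r i * V r j)
          = (sgn (s i) * sgn (s j)) * (if i = j then (1:ℝ) else 0) := by
        intro j
        rw [← Finset.mul_sum, hVij]
      simp_rw [h3, mul_ite, mul_zero]
      rw [Finset.sum_ite_eq Finset.univ i (fun j => sgn (s i) * sgn (s j) * 1)]
      rw [if_pos (Finset.mem_univ i), mul_one, sgn_mul_self]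
    simp_rw [h2]
    simp
  -- pointwise bound on W s
  have hWle : ∀ s : Fin m → Bool, ∑ r, |∑ i, V r i * sgn (s i)| ≤ (m:ℝ) * Real.sqrt 2 := by
    intro s
    have hcs := sq_sum_le_card_mul_sum_sq (s := (Finset.univ : Finset (Fin (2*m))))
      (f := fun r => |∑ i, V r i * sgn (s i)|)
    simp only [sq_abs] at hcs
    rw [hZ2 s, Finset.card_univ, Fintype.card_fin] at hcs
    push_cast at hcs
    have hW0 : (0:ℝ) ≤ ∑ r, |∑ i, V r i * sgn (s i)| :=
      Finset.sum_nonneg fun r _ => abs_nonneg _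
    have h2 : (∑ r, |∑ i, V r i * sgn (s i)|)^2 ≤ ((m:ℝ) * Real.sqrt 2)^2 := by
      calc (∑ r, |∑ i, V r i * sgn (s i)|)^2 ≤ 2*(m:ℝ)*(m:ℝ) := by linarith [hcs]
        _ = ((m:ℝ) * Real.sqrt 2)^2 := by
            rw [mul_pow, Real.sq_sqrt (by norm_num : (0:ℝ) ≤ 2)]; ring
    calc ∑ r, |∑ i, V r i * sgn (s i)|
        = Real.sqrt ((∑ r, |∑ i, V r i * sgn (s i)|)^2) := (Real.sqrt_sq hW0).symm
      _ ≤ Real.sqrt (((m:ℝ) * Real.sqrt 2)^2) := Real.sqrt_le_sqrt h2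
      _ = (m:ℝ) * Real.sqrt 2 := Real.sqrt_sq (by positivity)
  have hcard2 : (Finset.univ : Finset (Fin m → Bool)).card = 2^m := by
    simp [Finset.card_univ]
  -- part 1 : total sum lower bound
  have htot : (2:ℝ)^m * ((m:ℝ) / Real.sqrt 2)
      ≤ ∑ s : Fin m → Bool, ∑ r, |∑ i, V r i * sgn (s i)| := by
    rw [Finset.sum_comm]
    have h1 : ∀ r : Fin (2*m), (2:ℝ)^m * ((∑ i, (V r i)^2) / Real.sqrt 2)
        ≤ ∑ s : Fin m → Bool, |∑ i, V r i * sgn (s i)| := by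
      intro r
      have hk := Khin.khin_row (fun i => V r i) (hrow r)
      exact hk
    calc (2:ℝ)^m * ((m:ℝ) / Real.sqrt 2)
        = ∑ r : Fin (2*m), (2:ℝ)^m * ((∑ i, (V r i)^2) / Real.sqrt 2) := by
          simp_rw [← Finset.mul_sum, ← Finset.sum_div, htrace]
      _ ≤ _ := Finset.sum_le_sum fun r _ => h1 r
  constructor
  · -- first part
    rw [div_le_div_iff₀ (by positivity) (by positivity)]
    have e1 : (∑ s : Fin m → Bool, ∑ r, |V.mulVec (fun i => sgn (s i)) r|)
        = ∑ s : Fin m → Bool, ∑ r, |∑ i, V r i * sgn (s i)| := by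
      apply Finset.sum_congr rfl; intro s _
      apply Finset.sum_congr rfl; intro r _
      rw [hmv]
    rw [e1]
    have h2 : (4 * (m:ℝ)) * 2^m = (4 * Real.sqrt 2) * ((2:ℝ)^m * ((m:ℝ) / Real.sqrt 2)) := by
      field_simp
    calc (4 * (m:ℝ)) * 2^m
        = (4 * Real.sqrt 2) * ((2:ℝ)^m * ((m:ℝ) / Real.sqrt 2)) := h2
      _ ≤ (4 * Real.sqrt 2) * ∑ s : Fin m → Bool, ∑ r, |∑ i, V r i * sgn (s i)| :=
          mul_le_mul_of_nonneg_left htot (by positivity)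
      _ = (∑ s : Fin m → Bool, ∑ r, |∑ i, V r i * sgn (s i)|) * (4 * Real.sqrt 2) := by ring
  constructor
  · -- second part
    rw [div_le_div_iff₀ (by positivity) (by norm_num)]
    have hptw : ∀ s : Fin m → Bool, (∑ r, |V.mulVec (fun i => sgn (s i)) r|)^2
        ≤ 2 * (m:ℝ)^2 := by
      intro s
      have hcs := sq_sum_le_card_mul_sum_sq (s := (Finset.univ : Finset (Fin (2*m))))
        (f := fun r => |∑ i, V r i * sgn (s i)|)
      simp only [sq_abs] at hcs
      rw [hZ2 s, Finset.card_univ, Fintype.card_fin] at hcs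
      have e1 : (∑ r, |V.mulVec (fun i => sgn (s i)) r|)
          = ∑ r, |∑ i, V r i * sgn (s i)| := by
        apply Finset.sum_congr rfl; intro r _; rw [hmv]
      rw [e1]
      calc (∑ r, |∑ i, V r i * sgn (s i)|)^2 ≤ (2*m : ℕ) * (m:ℝ) := hcs
        _ = 2 * (m:ℝ)^2 := by push_cast; ring
    calc (∑ s : Fin m → Bool, (∑ r, |V.mulVec (fun i => sgn (s i)) r|) ^ 2) * 8
        ≤ (∑ s : Fin m → Bool, 2 * (m:ℝ)^2) * 8 := by
          apply mul_le_mul_of_nonneg_right (Finset.sum_le_sum fun s _ => hptw s) (by norm_num)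
      _ = (2:ℝ)^m * (16 * (m:ℝ)^2) := by
          rw [Finset.sum_const, hcard2, nsmul_eq_mul]
          push_cast
          ring
      _ = (4 * (m:ℝ))^2 * 2^m := by ring
  · -- third part
    set t0 : ℝ := (4 * m : ℝ) / (12 * Real.sqrt 2) with ht0
    set Φ := Finset.univ.filter fun s : Fin m → Bool =>
        t0 ≤ ∑ r, |V.mulVec (fun i => sgn (s i)) r| with hΦ
    have e1 : ∀ s : Fin m → Bool, (∑ r, |V.mulVec (fun i => sgn (s i)) r|)
        = ∑ r, |∑ i, V r i * sgn (s i)| := by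
      intro s; apply Finset.sum_congr rfl; intro r _; rw [hmv]
    have ht0pos : 0 ≤ t0 := by rw [ht0]; positivity
    -- split total sum
    have hsplit := Finset.sum_filter_add_sum_filter_not Finset.univ
      (fun s : Fin m → Bool => t0 ≤ ∑ r, |V.mulVec (fun i => sgn (s i)) r|)
      (fun s => ∑ r, |∑ i, V r i * sgn (s i)|)
    have hA : ∑ s ∈ Φ, ∑ r, |∑ i, V r i * sgn (s i)| ≤ (Φ.card : ℝ) * ((m:ℝ) * Real.sqrt 2) := by
      calc ∑ s ∈ Φ, ∑ r, |∑ i, V r i * sgn (s i)|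
          ≤ ∑ s ∈ Φ, (m:ℝ) * Real.sqrt 2 := Finset.sum_le_sum fun s _ => hWle s
        _ = (Φ.card : ℝ) * ((m:ℝ) * Real.sqrt 2) := by rw [Finset.sum_const, nsmul_eq_mul]
    have hB : ∑ s ∈ Finset.univ.filter (fun s : Fin m → Bool =>
          ¬ (t0 ≤ ∑ r, |V.mulVec (fun i => sgn (s i)) r|)), ∑ r, |∑ i, V r i * sgn (s i)|
        ≤ (2:ℝ)^m * t0 := by
      calc ∑ s ∈ Finset.univ.filter (fun s : Fin m → Bool =>
            ¬ (t0 ≤ ∑ r, |V.mulVec (fun i => sgn (s i)) r|)), ∑ r, |∑ i, V r i * sgn (s i)|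
          ≤ ∑ s ∈ Finset.univ.filter (fun s : Fin m → Bool =>
            ¬ (t0 ≤ ∑ r, |V.mulVec (fun i => sgn (s i)) r|)), t0 := by
            apply Finset.sum_le_sum
            intro s hs
            rw [Finset.mem_filter] at hs
            rw [← e1 s]
            exact le_of_lt (lt_of_not_ge hs.2)
        _ = ((Finset.univ.filter (fun s : Fin m → Bool =>
            ¬ (t0 ≤ ∑ r, |V.mulVec (fun i => sgn (s i)) r|))).card : ℝ) * t0 := by
            rw [Finset.sum_const, nsmul_eq_mul]
        _ ≤ (2:ℝ)^m * t0 := by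
            apply mul_le_mul_of_nonneg_right _ ht0pos
            calc ((Finset.univ.filter (fun s : Fin m → Bool =>
                ¬ (t0 ≤ ∑ r, |V.mulVec (fun i => sgn (s i)) r|))).card : ℝ)
                ≤ ((Finset.univ : Finset (Fin m → Bool)).card : ℝ) := by
                  exact_mod_cast Finset.card_filter_le _ _
              _ = (2:ℝ)^m := by rw [hcard2]; push_cast; ring
    -- combine
    have hkey : (2:ℝ)^m * ((m:ℝ) / Real.sqrt 2)
        ≤ (Φ.card : ℝ) * ((m:ℝ) * Real.sqrt 2) + (2:ℝ)^m * t0 := by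
      calc (2:ℝ)^m * ((m:ℝ) / Real.sqrt 2)
          ≤ ∑ s : Fin m → Bool, ∑ r, |∑ i, V r i * sgn (s i)| := htot
        _ = (∑ s ∈ Φ, ∑ r, |∑ i, V r i * sgn (s i)|)
            + ∑ s ∈ Finset.univ.filter (fun s : Fin m → Bool =>
              ¬ (t0 ≤ ∑ r, |V.mulVec (fun i => sgn (s i)) r|)), ∑ r, |∑ i, V r i * sgn (s i)| := hsplit.symm
        _ ≤ _ := add_le_add hA hB
    -- conclude: multiply hkey through by √2
    have hs2ne : Real.sqrt 2 ≠ 0 := ne_of_gt hs2pos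
    have hkey2 : (2:ℝ)^m * (m:ℝ) ≤ (Φ.card : ℝ) * ((m:ℝ) * 2) + (2:ℝ)^m * ((m:ℝ)/3) := by
      have h := mul_le_mul_of_nonneg_right hkey (le_of_lt hs2pos)
      have e2 : (2:ℝ)^m * ((m:ℝ) / Real.sqrt 2) * Real.sqrt 2 = (2:ℝ)^m * (m:ℝ) := by
        field_simp
      have e3 : ((Φ.card : ℝ) * ((m:ℝ) * Real.sqrt 2) + (2:ℝ)^m * t0) * Real.sqrt 2
          = (Φ.card : ℝ) * ((m:ℝ) * 2) + (2:ℝ)^m * (t0 * Real.sqrt 2) := by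
        rw [add_mul]
        congr 1
        · rw [mul_assoc, mul_assoc, hs2]
        · ring
      have e4 : t0 * Real.sqrt 2 = (m:ℝ)/3 := by
        rw [ht0]
        rw [div_mul_eq_mul_div, mul_comm (12:ℝ) (Real.sqrt 2), ← div_div,
          mul_div_assoc, mul_comm (4*(m:ℝ)) _, mul_div_assoc]
        rw [div_self hs2ne]
        ring
      rw [e2, e3, e4] at h
      exact h
    rw [le_div_iff₀ (by positivity : (0:ℝ) < (2:ℝ)^m)]
    have hp2 : (0:ℝ) < (2:ℝ)^m := by positivity
    have hmpos : (0:ℝ) < (m:ℝ) := by exact_mod_cast hm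
    have hcnn : (0:ℝ) ≤ (Φ.card : ℝ) := Nat.cast_nonneg _
    nlinarith [hkey2, hp2, hmpos, hcnn, mul_pos hp2 hmpos]
end

section
/- Decoupling inner product identity for the Paninski family under a channel: with p_z the Paninski family with parameter ε on [k] and W a channel from [k] to finite Y with Σ_x W(y|x) > 0, define δ_z^W(y) = (W∘p_z(y) − W∘u(y))/(W∘u(y)). Then for all z, z' ∈ {−1,1}^{k/2}: Σ_y W∘u(y) · δ_z^W(y) · δ_{z'}^W(y) = (4ε²/k) · zᵀ H(W) z'. -/
/-- The Paninski perturbed family on `[k]` with `k = 2m`. -/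
noncomputable def paninski (m : ℕ) (ε : ℝ) (z : Fin m → ℝ) : Fin m × Bool → ℝ :=
  fun x => (1 + (if x.2 then -1 else 1) * 2 * ε * z x.1) / (2 * m)

/-!
The pair `(2i-1, 2i)` of `[k]` is `((i, false), (i, true))`. On that pair `p_z - u` is
`±ε z_i / m`, so `W∘p_z - W∘u = (ε/m) Σ_i z_i (W(·|2i-1) - W(·|2i))` is linear in `z`, while
`W∘u = (Σ_x W(·|x)) / k`. The identity is then the expansion of the product of two such linear
forms divided by `W∘u`.
-/

open Finset

theorem mul_div_mul_div_self {K : Type*} [Field K] (a b c : K) :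
    a * (b / a) * (c / a) = b * c / a := by
  rcases eq_or_ne a 0 with rfl | ha
  · simp
  · field_simp

theorem paninski_sub_uniform (m : ℕ) (ε : ℝ) (z : Fin m → ℝ) (x : Fin m × Bool) :
    paninski m ε z x - 1 / (2 * m) = (if x.2 then -1 else 1) * (ε * z x.1 / m) := by
  rw [paninski, ← sub_div, add_sub_cancel_left]
  ring

theorem sum_paninski_mul_sub_sum_uniform_mul {Y : Type*} (m : ℕ) (ε : ℝ) (z : Fin m → ℝ)
    (W : Fin m × Bool → Y → ℝ) (y : Y) :
    ∑ x, paninski m ε z x * W x y - ∑ x, 1 / (2 * m : ℝ) * W x y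
      = ε / m * ∑ i, z i * (W (i, false) y - W (i, true) y) := by
  rw [← sum_sub_distrib]
  simp only [← sub_mul, paninski_sub_uniform, Fintype.sum_prod_type, Fintype.sum_bool, mul_sum]
  refine sum_congr rfl fun i _ => ?_
  simp only [if_true, Bool.false_eq_true, if_false]
  ring

theorem sum_mul_Hmat_mul {Y : Type*} [Fintype Y] (m : ℕ) (W : Fin m × Bool → Y → ℝ)
    (z z' : Fin m → ℝ) :
    ∑ i₁, ∑ i₂, z i₁ * Hmat m W i₁ i₂ * z' i₂
      = ∑ y : Y, (∑ i, z i * (W (i, false) y - W (i, true) y))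
          * (∑ i, z' i * (W (i, false) y - W (i, true) y)) / ∑ x, W x y := by
  simp only [Hmat, Matrix.of_apply, mul_sum, sum_mul, sum_div]
  refine (sum_congr rfl fun i₁ _ => sum_comm).trans (sum_comm.trans ?_)
  refine sum_congr rfl fun y _ => sum_comm.trans ?_
  refine sum_congr rfl fun i₂ _ => sum_congr rfl fun i₁ _ => ?_
  ring

theorem paninski_decoupling_inner_product_general (m : ℕ) (ε : ℝ)
    {Y : Type*} [Fintype Y] (W : Fin m × Bool → Y → ℝ)
    (z z' : Fin m → ℝ) :
    ∑ y, (∑ x, (1 / (2 * m : ℝ)) * W x y)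
        * (((∑ x, paninski m ε z x * W x y) - ∑ x, (1 / (2 * m : ℝ)) * W x y)
            / ∑ x, (1 / (2 * m : ℝ)) * W x y)
        * (((∑ x, paninski m ε z' x * W x y) - ∑ x, (1 / (2 * m : ℝ)) * W x y)
            / ∑ x, (1 / (2 * m : ℝ)) * W x y)
      = (4 * ε ^ 2 / (2 * m)) * ∑ i₁, ∑ i₂, z i₁ * Hmat m W i₁ i₂ * z' i₂ := by
  have coeff : (ε / m) * (ε / m) * (2 * m) = 4 * ε ^ 2 / (2 * m) := by
    rcases eq_or_ne (m : ℝ) 0 with hm | hm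
    · simp [hm]
    · field_simp
      ring
  rw [sum_mul_Hmat_mul, mul_sum]
  refine sum_congr rfl fun y _ => ?_
  rw [mul_div_mul_div_self, sum_paninski_mul_sub_sum_uniform_mul,
    sum_paninski_mul_sub_sum_uniform_mul, ← mul_sum, one_div_mul_eq_div,
    div_div_eq_mul_div, ← coeff]
  ring

/-- Decoupling inner product identity:
`Σ_y W∘u(y) δ_z^W(y) δ_{z'}^W(y) = (4ε²/k) zᵀ H(W) z'`. -/
theorem paninski_decoupling_inner_product (m : ℕ) (hm : 0 < m) (ε : ℝ)
    (hε0 : 0 < ε) (hε : ε < 1 / 2)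
    {Y : Type*} [Fintype Y] (W : Fin m × Bool → Y → ℝ)
    (hW0 : ∀ x y, 0 ≤ W x y) (hW1 : ∀ x, ∑ y, W x y = 1)
    (hWy : ∀ y, 0 < ∑ x, W x y)
    (z z' : Fin m → ℝ) (hz : ∀ i, z i = 1 ∨ z i = -1) (hz' : ∀ i, z' i = 1 ∨ z' i = -1) :
    ∑ y, (∑ x, (1 / (2 * m : ℝ)) * W x y)
        * (((∑ x, paninski m ε z x * W x y) - ∑ x, (1 / (2 * m : ℝ)) * W x y)
            / ∑ x, (1 / (2 * m : ℝ)) * W x y)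
        * (((∑ x, paninski m ε z' x * W x y) - ∑ x, (1 / (2 * m : ℝ)) * W x y)
            / ∑ x, (1 / (2 * m : ℝ)) * W x y)
      = (4 * ε ^ 2 / (2 * m)) * ∑ i₁, ∑ i₂, z i₁ * Hmat m W i₁ i₂ * z' i₂ :=
  paninski_decoupling_inner_product_general m ε W z z'
end
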